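/- arXiv:2210.11700 — 4 statements merged into one kernel-verified Lean document; each statement's English description precedes it below -/
import Mathlib

section
/- Let G be a cyclic group generated by z of order n, and let i, k be integers with 1 ≤ i, k ≤ n−2. If the sets {z, z², …, z^k} and {z^i, z^{2i}, …, z^{ki}} are equal, then i = 1 (as an element of Z_n, i.e., z^i = z). -/
/-!
Pass to `ZMod n`, where the hypothesis says that multiplication by `i` maps the interval
`S = {1, …, k}` onto itself; since `1 ∈ S`, `i` is then a unit and `i ∈ S`, i.e. `i ≤ k`.
A unit that preserves `S` preserves the number `#{x ∈ S | x + b ∈ S}` of representations of `b`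
as a difference in `S`, so `b = 1` and `b = i` have equally many. For an interval this number is
`(k - b) + (k + b - n)`, which is `k - 1` for `b = 1` but smaller for `2 ≤ b ≤ k ≤ n - 2`.
-/

/-- The Cayley digraph relation of `G` with connection set `S`:
there is an arc from `x` to `y` iff `y = s * x` for some `s ∈ S`. -/
def cayRel {G : Type*} [Group G] (S : Set G) : G → G → Prop :=
  fun x y => y * x⁻¹ ∈ S

/-- The automorphism group of the Cayley digraph `Cay(G,S)`,
as a subgroup of the permutations of the vertex set `G`. -/
def cayAut {G : Type*} [Group G] (S : Set G) : Subgroup (Equiv.Perm G) where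
  carrier := {f | ∀ x y, cayRel S (f x) (f y) ↔ cayRel S x y}
  one_mem' := by intro x y; rfl
  mul_mem' := by
    intro f g hf hg x y
    rw [Equiv.Perm.mul_apply, Equiv.Perm.mul_apply, hf, hg]
  inv_mem' := by
    intro f hf x y
    simpa [Equiv.Perm.inv_def, Equiv.apply_symm_apply] using (hf (f⁻¹ x) (f⁻¹ y)).symm

/-- `Cay(G,S)` is a CI-digraph: any isomorphic Cayley digraph `Cay(G,T)`
is Cayley isomorphic to it. -/
def IsCIDigraph {G : Type*} [Group G] (S : Set G) : Prop :=
  ∀ T : Set G, (1 : G) ∉ T → Nonempty (cayRel S ≃r cayRel T) →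
    ∃ α : G ≃* G, α '' S = T

/-- `G` has the `m`-DCI property: every Cayley digraph of `G` of out-valency `m`
is a CI-digraph. -/
def HasDCI (G : Type*) [Group G] (m : ℕ) : Prop :=
  ∀ S : Set G, (1 : G) ∉ S → S.ncard = m → IsCIDigraph S

/-- The right regular representation `R(G)` as a subgroup of `Perm G`. -/
def rightReg (G : Type*) [Group G] : Subgroup (Equiv.Perm G) where
  carrier := Set.range fun g : G => Equiv.mulRight g
  one_mem' := ⟨1, by ext x; simp⟩
  mul_mem' := by
    rintro _ _ ⟨g, rfl⟩ ⟨h, rfl⟩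
    exact ⟨h * g, by ext x; simp [mul_assoc]⟩
  inv_mem' := by
    rintro _ ⟨g, rfl⟩
    exact ⟨g⁻¹, by ext x; simp [Equiv.Perm.inv_def]⟩

/-- A subgroup of permutations of `V` is regular if for all `x y : V` there is a
unique element sending `x` to `y`. -/
def IsRegularSubgroup {V : Type*} (H : Subgroup (Equiv.Perm V)) : Prop :=
  ∀ x y : V, ∃! h : H, (h : Equiv.Perm V) x = y

open Finset

theorem card_filter_add_mod_mem_Icc {n k m : ℕ} (hk : k < n) (hm : m < n) :
    #{v ∈ Icc 1 k | (v + m) % n ∈ Icc 1 k} = (k - m) + (k + m - n) := by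
  have hsplit : {v ∈ Icc 1 k | (v + m) % n ∈ Icc 1 k} = Icc 1 (k - m) ∪ Icc (n + 1 - m) k := by
    ext v
    simp only [mem_filter, mem_union, mem_Icc]
    rcases le_or_gt v k with hv | hv
    swap; · omega
    rcases lt_or_ge (v + m) n with hlt | hge
    · rw [Nat.mod_eq_of_lt hlt]; omega
    · rw [Nat.mod_eq_sub_mod hge, Nat.mod_eq_of_lt (by omega)]; omega
  have hdisj : Disjoint (Icc 1 (k - m)) (Icc (n + 1 - m) k) :=
    disjoint_left.2 fun v hv hv' => by simp only [mem_Icc] at hv hv'; omega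
  rw [hsplit, card_union_of_disjoint hdisj, Nat.card_Icc, Nat.card_Icc]
  omega

def diffCount {R : Type*} [Add R] [DecidableEq R] (S : Finset R) (b : R) : ℕ :=
  #{x ∈ S | x + b ∈ S}

theorem diffCount_mul_of_image_mul_eq {R : Type*} [Semiring R] [DecidableEq R] {S : Finset R}
    {a : R} (ha : IsUnit a) (hS : S.image (· * a) = S) (b : R) :
    diffCount S (b * a) = diffCount S b := by
  have hmem (x : R) : x * a ∈ S ↔ x ∈ S := by
    conv_lhs => rw [← hS]
    simp [ha.mul_left_inj]
  calc diffCount S (b * a) = #{x ∈ S.image (· * a) | x + b * a ∈ S} := by rw [hS]; rfl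
    _ = #{x ∈ S | x + b ∈ S} := by
      rw [filter_image, card_image_of_injective _ ha.mul_left_injective]
      simp only [← add_mul, hmem]

theorem isUnit_of_one_mem_of_image_mul_eq {M : Type*} [Monoid M] [IsDedekindFiniteMonoid M]
    [DecidableEq M] {S : Finset M} {a : M} (h1 : 1 ∈ S) (hS : S.image (· * a) = S) :
    IsUnit a := by
  obtain ⟨b, -, hb⟩ := mem_image.1 (hS.symm ▸ h1 : 1 ∈ S.image (· * a))
  exact .of_mul_eq_one_right b hb

def residueInterval (n k : ℕ) : Finset (ZMod n) := (Icc 1 k).image (↑)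

section
variable {n k : ℕ} [NeZero n]

theorem mem_residueInterval (hk : k < n) {x : ZMod n} :
    x ∈ residueInterval n k ↔ x.val ∈ Icc 1 k := by
  constructor
  · rintro hx
    obtain ⟨j, hj, rfl⟩ := mem_image.1 hx
    rwa [ZMod.val_cast_of_lt ((mem_Icc.1 hj).2.trans_lt hk)]
  · exact fun hx => mem_image.2 ⟨x.val, hx, ZMod.natCast_zmod_val x⟩

theorem diffCount_residueInterval {m : ℕ} (hk : k < n) (hm : m < n) :
    diffCount (residueInterval n k) m = (k - m) + (k + m - n) := by
  have hinj : Set.InjOn (Nat.cast : ℕ → ZMod n) (Icc 1 k) := fun a ha b hb hab => by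
    rw [← ZMod.val_cast_of_lt ((mem_Icc.1 ha).2.trans_lt hk),
      ← ZMod.val_cast_of_lt ((mem_Icc.1 hb).2.trans_lt hk), hab]
  rw [← card_filter_add_mod_mem_Icc hk hm, diffCount, residueInterval, filter_image,
    card_image_of_injOn (hinj.mono (filter_subset _ _))]
  congr 1
  refine filter_congr fun v _ => ?_
  rw [← residueInterval, ← Nat.cast_add, mem_residueInterval hk, ZMod.val_natCast]

end

theorem pow_eq_pow_iff_natCast_eq {G : Type*} [LeftCancelMonoid G] (z : G) (a b : ℕ) :
    z ^ a = z ^ b ↔ (a : ZMod (orderOf z)) = b := by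
  rw [pow_eq_pow_iff_modEq, ZMod.natCast_eq_natCast_iff]

theorem natCast_image_eq_of_pow_image_eq {G : Type*} [LeftCancelMonoid G] (z : G)
    {s t : Set ℕ} {f g : ℕ → ℕ} (h : (fun j => z ^ f j) '' s = (fun j => z ^ g j) '' t) :
    (fun j => (f j : ZMod (orderOf z))) '' s = (fun j => (g j : ZMod (orderOf z))) '' t := by
  have key {s t : Set ℕ} {f g : ℕ → ℕ} (h : (fun j => z ^ f j) '' s ⊆ (fun j => z ^ g j) '' t) :
      (fun j => (f j : ZMod (orderOf z))) '' s ⊆ (fun j => (g j : ZMod (orderOf z))) '' t := by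
    rintro _ ⟨j, hj, rfl⟩
    obtain ⟨j', hj', he⟩ := h ⟨j, hj, rfl⟩
    exact ⟨j', hj', (pow_eq_pow_iff_natCast_eq z _ _).1 he⟩
  exact (key h.le).antisymm (key h.ge)

theorem stmt0_general {G : Type*} [Group G] (z : G) (n : ℕ) (hzn : orderOf z = n)
    (i k : ℕ) (hi1 : 1 ≤ i) (hi2 : i ≤ n - 2) (hk1 : 1 ≤ k) (hk2 : k ≤ n - 2)
    (h : {g : G | ∃ j : ℕ, 1 ≤ j ∧ j ≤ k ∧ g = z ^ j} =
         {g : G | ∃ j : ℕ, 1 ≤ j ∧ j ≤ k ∧ g = z ^ (j * i)}) :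
    z ^ i = z := by
  have : NeZero n := ⟨by omega⟩
  have hk : k < n := by omega
  have hpow : (fun j => z ^ j) '' Set.Icc 1 k = (fun j => z ^ (j * i)) '' Set.Icc 1 k := by
    simpa [Set.image, eq_comm, and_assoc] using h
  have hS : (residueInterval n k).image (· * (i : ZMod n)) = residueInterval n k := by
    subst hzn
    rw [← coe_inj, coe_image, residueInterval, coe_image, coe_Icc, Set.image_image]
    have := natCast_image_eq_of_pow_image_eq z hpow
    push_cast at this
    exact this.symm
  have h1 : (1 : ZMod n) ∈ residueInterval n k := mem_image.2 ⟨1, by simp [hk1], Nat.cast_one⟩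
  have hik : i ≤ k := by
    have := mem_image_of_mem (· * (i : ZMod n)) h1
    rw [hS, one_mul, mem_residueInterval hk, ZMod.val_cast_of_lt (by omega)] at this
    exact (mem_Icc.1 this).2
  have hcount := diffCount_mul_of_image_mul_eq (isUnit_of_one_mem_of_image_mul_eq h1 hS) hS 1
  rw [one_mul, ← Nat.cast_one, diffCount_residueInterval hk (by omega),
    diffCount_residueInterval hk (by omega)] at hcount
  obtain rfl : i = 1 := by omega
  exact pow_one z

/-- If `{z, z^2, …, z^k} = {z^i, z^{2i}, …, z^{ki}}` in a cyclic group
generated by `z` of order `n`, with `1 ≤ i, k ≤ n - 2`, then `z^i = z`. -/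
theorem stmt0 {G : Type*} [Group G] (z : G) (n : ℕ) (hzn : orderOf z = n)
    (hgen : ∀ g : G, g ∈ Subgroup.zpowers z)
    (i k : ℕ) (hi1 : 1 ≤ i) (hi2 : i ≤ n - 2) (hk1 : 1 ≤ k) (hk2 : k ≤ n - 2)
    (h : {g : G | ∃ j : ℕ, 1 ≤ j ∧ j ≤ k ∧ g = z ^ j} =
         {g : G | ∃ j : ℕ, 1 ≤ j ∧ j ≤ k ∧ g = z ^ (j * i)}) :
    z ^ i = z :=
  stmt0_general z n hzn i k hi1 hi2 hk1 hk2 h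
end

section
/- A Cayley digraph Cay(G, S) is a CI-digraph if and only if every regular subgroup of Aut(Cay(G, S)) that is isomorphic to G is conjugate in Aut(Cay(G, S)) to the right regular representation R(G). -/
/-!
An isomorphism `e : Cay(G,S) → Cay(G,T)` conjugates `R(G) ≤ Aut(Cay(G,T))` to a regular subgroup
of `Aut(Cay(G,S))` isomorphic to `G`. Conversely, every regular subgroup `R ≅ G` of `Sym(G)` is
`μ R(G) μ⁻¹` for some permutation `μ`; pulling `Cay(G,S)` back along `μ` gives a right-invariant
digraph, i.e. a Cayley digraph `Cay(G,T) ≅ Cay(G,S)`, and an automorphism `α` with `α(S) = T`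
makes `μ α` an automorphism of `Cay(G,S)` conjugating `R` to `R(G)`. Finally, a permutation
normalizing `R(G)` has the form `x ↦ α(x) a` with `α ∈ Aut(G)`; applied to `e f⁻¹`, where
`f ∈ Aut(Cay(G,S))` conjugates `e⁻¹ R(G) e` back to `R(G)`, this `α` maps `S` onto `T`.
-/

open Function Equiv Subgroup

section Cayley

variable {G : Type*} [Group G]

theorem cayRel_mul_right {T : Set G} (x y g : G) : cayRel T (x * g) (y * g) ↔ cayRel T x y := by
  simp [cayRel, mul_assoc]

theorem eq_cayRel_of_mul_right_invariant {ρ : G → G → Prop}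
    (hρ : ∀ x y g, ρ (x * g) (y * g) ↔ ρ x y) : ρ = cayRel {t | ρ 1 t} := by
  ext x y
  simpa [cayRel] using (hρ x y x⁻¹).symm

theorem cayRel_image_apply_iff (α : G ≃* G) (S : Set G) (x y : G) :
    cayRel (α '' S) (α x) (α y) ↔ cayRel S x y := by
  simp only [cayRel, ← map_inv, ← map_mul, α.injective.mem_set_image]

theorem image_eq_of_relIso {S T : Set G} (c : cayRel S ≃r cayRel T) :
    (fun x => c x * (c 1)⁻¹) '' S = T := by
  ext t
  constructor
  · rintro ⟨s, hs, rfl⟩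
    simpa [cayRel] using c.map_rel_iff.2 (show cayRel S 1 s by simpa [cayRel])
  · intro ht
    refine ⟨c.symm (t * c 1), ?_, by simp⟩
    have : cayRel T (c 1) (c (c.symm (t * c 1))) := by simpa [cayRel] using ht
    simpa [cayRel] using c.map_rel_iff.1 this

def relIsoOfMemCayAut {S : Set G} {f : Perm G} (hf : f ∈ cayAut S) : cayRel S ≃r cayRel S :=
  ⟨f, hf _ _⟩

theorem rightReg_le_cayAut (S : Set G) : rightReg G ≤ cayAut S := by
  rintro _ ⟨g, rfl⟩ x y
  exact cayRel_mul_right x y g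

theorem map_conj_cayAut_le {S T : Set G} (e : cayRel S ≃r cayRel T) :
    (cayAut T).map (MulAut.conj (e.toEquiv : Perm G)⁻¹).toMonoidHom ≤ cayAut S := by
  rintro _ ⟨f, hf, rfl⟩ x y
  change cayRel S (e.symm (f (e x))) (e.symm (f (e y))) ↔ cayRel S x y
  rw [← e.map_rel_iff, e.apply_symm_apply, e.apply_symm_apply, hf, e.map_rel_iff]

end Cayley

section Regular

theorem isRegularSubgroup_iff_bijective {V : Type*} {H : Subgroup (Perm V)} :
    IsRegularSubgroup H ↔ ∀ v, Bijective fun h : H => (h : Perm V) v :=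
  forall_congr' fun _ => (bijective_iff_existsUnique _).symm

theorem IsRegularSubgroup.map_conj {V : Type*} {H : Subgroup (Perm V)} (hH : IsRegularSubgroup H)
    (c : Perm V) : IsRegularSubgroup (H.map (MulAut.conj c).toMonoidHom) := by
  rw [isRegularSubgroup_iff_bijective] at hH ⊢
  intro v
  let e : H ≃* H.map (MulAut.conj c).toMonoidHom := (MulAut.conj c).subgroupMap H
  have hcomp : (fun h : H.map (MulAut.conj c).toMonoidHom => (h : Perm V) v) ∘ e =
      c ∘ fun h : H => (h : Perm V) (c⁻¹ v) :=
    rfl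
  rw [← Bijective.of_comp_iff _ e.bijective, hcomp]
  exact c.bijective.comp (hH _)

variable (G : Type*) [Group G]

def rightRegHom : G →* Perm G where
  toFun g := Equiv.mulRight g⁻¹
  map_one' := by simp
  map_mul' g h := by rw [mul_inv_rev, Equiv.mulRight_mul]

theorem range_rightRegHom : (rightRegHom G).range = rightReg G := by
  ext f
  constructor
  · rintro ⟨g, rfl⟩
    exact ⟨g⁻¹, rfl⟩
  · rintro ⟨g, rfl⟩
    exact ⟨g⁻¹, by simp [rightRegHom]⟩

theorem rightRegHom_injective : Injective (rightRegHom G) := fun g h hgh => by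
  simpa [rightRegHom] using congr($hgh 1)

noncomputable def rightRegEquiv : G ≃* rightReg G :=
  (MonoidHom.ofInjective (rightRegHom_injective G)).trans
    (MulEquiv.subgroupCongr (range_rightRegHom G))

theorem isRegularSubgroup_rightReg : IsRegularSubgroup (rightReg G) := by
  rw [isRegularSubgroup_iff_bijective]
  intro v
  have hcomp : (fun h : rightReg G => (h : Perm G) v) ∘ rightRegEquiv G = fun g => v * g⁻¹ := rfl
  rw [← Bijective.of_comp_iff _ (rightRegEquiv G).bijective, hcomp]
  exact (Equiv.mulLeft v).bijective.comp inv_involutive.bijective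

end Regular

section Normalizer

variable {G : Type*} [Group G]

theorem map_conj_map_conj {V : Type*} (H : Subgroup (Perm V)) (a b : Perm V) :
    (H.map (MulAut.conj a).toMonoidHom).map (MulAut.conj b).toMonoidHom =
      H.map (MulAut.conj (b * a)).toMonoidHom := by
  rw [Subgroup.map_map, map_mul]
  rfl

theorem mulEquiv_conj_mulRight (α : G ≃* G) (g : G) :
    MulAut.conj (α.toEquiv : Perm G) (Equiv.mulRight g) = Equiv.mulRight (α g) := by
  ext x
  simp [Perm.mul_apply]

theorem mulEquiv_mem_normalizer_rightReg (α : G ≃* G) :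
    (α.toEquiv : Perm G) ∈ normalizer (rightReg G : Set (Perm G)) := by
  rw [mem_normalizer_iff_conj_image_eq]
  change _ '' Set.range _ = Set.range _
  rw [← Set.range_comp, show ⇑(MulAut.conj (α.toEquiv : Perm G)) ∘ Equiv.mulRight =
    Equiv.mulRight ∘ α from funext (mulEquiv_conj_mulRight α), α.surjective.range_comp]

theorem exists_mulEquiv_of_mem_normalizer_rightReg {c : Perm G}
    (hc : c ∈ normalizer (rightReg G : Set (Perm G))) :
    ∃ α : G ≃* G, ∀ x, α x = c x * (c 1)⁻¹ := by
  have hc_mul_right : ∀ y, ∃ a, ∀ z, c (z * y) = c z * a := fun y => by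
    obtain ⟨a, ha⟩ := (mem_normalizer_iff.1 hc _).1 ⟨y, rfl⟩
    refine ⟨a, fun z => ?_⟩
    simpa [Perm.mul_apply] using congr($ha (c z)).symm
  have hc_mul : ∀ x y, c (x * y) = c x * ((c 1)⁻¹ * c y) := fun x y => by
    obtain ⟨a, ha⟩ := hc_mul_right y
    have ha_one := ha 1
    rw [one_mul] at ha_one
    rw [ha x, ha_one, inv_mul_cancel_left]
  refine ⟨{ toFun := fun x => c x * (c 1)⁻¹
            invFun := fun t => c⁻¹ (t * c 1)
            left_inv := fun x => by simp
            right_inv := fun t => by simp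
            map_mul' := fun x y => by simp only [hc_mul, mul_assoc] }, fun _ => rfl⟩

end Normalizer

section Criterion

variable {G : Type*} [Group G]

theorem IsRegularSubgroup.exists_map_conj_rightReg_eq {R : Subgroup (Perm G)}
    (hR : IsRegularSubgroup R) (φ : R ≃* G) :
    ∃ μ : Perm G, (rightReg G).map (MulAut.conj μ).toMonoidHom = R := by
  let μ : Perm G := (Equiv.inv G).trans
    (φ.symm.toEquiv.trans (Equiv.ofBijective _ (isRegularSubgroup_iff_bijective.1 hR 1)))
  have hμ_apply : ∀ x, μ x = (φ.symm x⁻¹ : Perm G) 1 := fun _ => rfl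
  have hμ : (MulAut.conj μ).toMonoidHom.comp (rightRegHom G) = R.subtype.comp φ.symm := by
    ext g y
    obtain ⟨z, rfl⟩ := μ.surjective y
    change μ (μ.symm (μ z) * g⁻¹) = (φ.symm g : Perm G) (μ z)
    rw [μ.symm_apply_apply, hμ_apply, hμ_apply, mul_inv_rev, inv_inv, map_mul, Subgroup.coe_mul,
      Perm.mul_apply]
  refine ⟨μ, ?_⟩
  rw [← range_rightRegHom, MonoidHom.map_range, hμ, MonoidHom.range_comp,
    MonoidHom.range_eq_top.2 φ.symm.surjective, ← MonoidHom.range_eq_map, range_subtype]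

theorem IsCIDigraph.exists_map_conj_eq_rightReg {S : Set G} (hS : (1 : G) ∉ S)
    (hCI : IsCIDigraph S) {R : Subgroup (Perm G)} (hRS : R ≤ cayAut S)
    (hR : IsRegularSubgroup R) (φ : R ≃* G) :
    ∃ f ∈ cayAut S, R.map (MulAut.conj f).toMonoidHom = rightReg G := by
  obtain ⟨μ, rfl⟩ := hR.exists_map_conj_rightReg_eq φ
  set T : Set G := {t | cayRel S (μ 1) (μ t)}
  have hT : (fun x y => cayRel S (μ x) (μ y)) = cayRel T :=
    eq_cayRel_of_mul_right_invariant fun x y g => by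
      simpa [Perm.mul_apply] using hRS ⟨Equiv.mulRight g, ⟨g, rfl⟩, rfl⟩ (μ x) (μ y)
  have h1T : (1 : G) ∉ T := by simpa [T, cayRel] using hS
  let ν : cayRel T ≃r cayRel S := ⟨μ, by rw [← hT]⟩
  obtain ⟨α, hα⟩ := hCI T h1T ⟨ν.symm⟩
  let α' : cayRel S ≃r cayRel T := ⟨α.toEquiv, by rw [← hα]; exact cayRel_image_apply_iff α S _ _⟩
  let p : cayRel S ≃r cayRel S := α'.trans ν
  refine ⟨(p.toEquiv : Perm G)⁻¹, inv_mem fun x y => p.map_rel_iff, ?_⟩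
  have hp : (p.toEquiv : Perm G)⁻¹ * μ = (α.toEquiv : Perm G)⁻¹ := by
    change (μ * α.toEquiv)⁻¹ * μ = _
    rw [mul_inv_rev, inv_mul_cancel_right]
  rw [map_conj_map_conj, hp]
  exact mem_normalizer_iff_map_conj_eq.1 (inv_mem (mulEquiv_mem_normalizer_rightReg α))

theorem isCIDigraph_of_forall_exists_map_conj_eq_rightReg {S : Set G}
    (h : ∀ R : Subgroup (Perm G), R ≤ cayAut S → IsRegularSubgroup R → Nonempty (R ≃* G) →
      ∃ f ∈ cayAut S, R.map (MulAut.conj f).toMonoidHom = rightReg G) :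
    IsCIDigraph S := by
  rintro T - ⟨e⟩
  let R := (rightReg G).map (MulAut.conj (e.toEquiv : Perm G)⁻¹).toMonoidHom
  have hRS : R ≤ cayAut S := (map_mono (rightReg_le_cayAut T)).trans (map_conj_cayAut_le e)
  have hR : IsRegularSubgroup R := (isRegularSubgroup_rightReg G).map_conj _
  have hRG : Nonempty (R ≃* G) :=
    ⟨((MulAut.conj _).subgroupMap (rightReg G)).symm.trans (rightRegEquiv G).symm⟩
  obtain ⟨f, hf, hfR⟩ := h R hRS hR hRG
  let c : cayRel S ≃r cayRel T := (relIsoOfMemCayAut (inv_mem hf)).trans e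
  have hc : (c.toEquiv : Perm G) ∈ normalizer (rightReg G : Set (Perm G)) := by
    have hfe := mem_normalizer_iff_map_conj_eq.2 ((map_conj_map_conj _ _ _).symm.trans hfR)
    rw [← inv_inv (c.toEquiv : Perm G)]
    exact inv_mem hfe
  obtain ⟨α, hα⟩ := exists_mulEquiv_of_mem_normalizer_rightReg hc
  refine ⟨α, ?_⟩
  rw [← image_eq_of_relIso c]
  exact congrArg (· '' S) (funext hα)

end Criterion

theorem stmt3_general {G : Type*} [Group G] (S : Set G) (hS : (1 : G) ∉ S) :
    IsCIDigraph S ↔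
      ∀ R : Subgroup (Equiv.Perm G), R ≤ cayAut S → IsRegularSubgroup R →
        Nonempty (R ≃* G) →
        ∃ f ∈ cayAut S, R.map (MulAut.conj f).toMonoidHom = rightReg G :=
  ⟨fun hCI _ hRS hR ⟨φ⟩ => hCI.exists_map_conj_eq_rightReg hS hRS hR φ,
    isCIDigraph_of_forall_exists_map_conj_eq_rightReg⟩

/-- Babai's criterion: `Cay(G,S)` is a CI-digraph iff every regular
subgroup of `Aut(Cay(G,S))` isomorphic to `G` is conjugate to `R(G)` in
`Aut(Cay(G,S))`. -/
theorem stmt3 {G : Type*} [Group G] [Finite G] (S : Set G) (hS : (1 : G) ∉ S) :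
    IsCIDigraph S ↔
      ∀ R : Subgroup (Equiv.Perm G), R ≤ cayAut S → IsRegularSubgroup R →
        Nonempty (R ≃* G) →
        ∃ f ∈ cayAut S, R.map (MulAut.conj f).toMonoidHom = rightReg G :=
  stmt3_general S hS
end

section
/- Let G be a finite group with a normal subgroup H contained in a subgroup M of G. Let C ⊆ G \ H be a union of cosets of H in G, and let S_M, T_M ⊆ M \ {1} be such that S_M^α = T_M for some α ∈ Aut(M) which fixes every coset of H in M setwise. Then Cay(G, C ∪ S_M) ≅ Cay(G, C ∪ T_M). -/
/-! Fix a right transversal `T` of `M`, so that every `g : G` is uniquely `m * t` with `m ∈ M`,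
`t ∈ T`, and let `φ (m * t) = α m * t`. Since `α m ∈ H m` and `H` is normal, `φ y (φ x)⁻¹` lies in
the coset `H (y x⁻¹)`; so `φ` preserves membership of `y x⁻¹` in `C` and in `M`, and when
`y x⁻¹ ∈ M` it sends `y x⁻¹` exactly to `α (y x⁻¹)`. -/

theorem QuotientGroup.mem_iff_of_mk_eq_mk {G : Type*} [Group G] {H : Subgroup G} [H.Normal]
    {C : Set G} (hC : ∀ c ∈ C, ∀ h ∈ H, h * c ∈ C) {a b : G} (hab : (a : G ⧸ H) = b) :
    a ∈ C ↔ b ∈ C := by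
  suffices key : ∀ {a b : G}, (a : G ⧸ H) = b → a ∈ C → b ∈ C from ⟨key hab, key hab.symm⟩
  intro a b hab ha
  simpa using hC a ha (b / a) (QuotientGroup.eq_iff_div_mem.1 hab.symm)

namespace Subgroup.IsComplement

variable {G : Type*} [Group G] {M : Subgroup G} {T : Set G}

noncomputable def mapLeft (hT : IsComplement (M : Set G) T) (α : M ≃* M) : Equiv.Perm G :=
  hT.equiv.trans ((α.toEquiv.prodCongr (Equiv.refl T)).trans hT.equiv.symm)

variable (hT : IsComplement (M : Set G) T) (α : M ≃* M)

theorem mapLeft_apply (g : G) : hT.mapLeft α g = α (hT.equiv g).1 * (hT.equiv g).2 := rfl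

theorem mapLeft_mul_of_mem {k : G} (hk : k ∈ M) (g : G) :
    hT.mapLeft α (k * g) = α ⟨k, hk⟩ * hT.mapLeft α g := by
  simp only [mapLeft_apply, hT.equiv_mul_left_of_mem hk, map_mul, Subgroup.coe_mul, mul_assoc]

theorem mapLeft_mul_inv_of_mem {x y : G} (hxy : y * x⁻¹ ∈ M) :
    hT.mapLeft α y * (hT.mapLeft α x)⁻¹ = α ⟨y * x⁻¹, hxy⟩ := by
  have hy := hT.mapLeft_mul_of_mem α hxy x
  rw [inv_mul_cancel_right] at hy
  rw [hy, mul_inv_cancel_right]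

variable {H : Subgroup G} [H.Normal]

theorem mk_mapLeft (hfix : ∀ m : M, ((α m : G) : G ⧸ H) = m) (g : G) :
    ((hT.mapLeft α g : G) : G ⧸ H) = g := by
  rw [mapLeft_apply, QuotientGroup.mk_mul, hfix, ← QuotientGroup.mk_mul,
    hT.equiv_fst_mul_equiv_snd]

theorem mk_mapLeft_mul_inv (hfix : ∀ m : M, ((α m : G) : G ⧸ H) = m) (x y : G) :
    ((hT.mapLeft α y * (hT.mapLeft α x)⁻¹ : G) : G ⧸ H) = (y * x⁻¹ : G) := by
  simp only [QuotientGroup.mk_mul, QuotientGroup.mk_inv, hT.mk_mapLeft α hfix]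

theorem mapLeft_mul_inv_mem_image_iff (hfix : ∀ m : M, ((α m : G) : G ⧸ H) = m) (hHM : H ≤ M)
    (S : Set M) (x y : G) :
    hT.mapLeft α y * (hT.mapLeft α x)⁻¹ ∈ Subtype.val '' (α '' S) ↔
      y * x⁻¹ ∈ Subtype.val '' S := by
  by_cases hxy : y * x⁻¹ ∈ M
  · rw [hT.mapLeft_mul_inv_of_mem α hxy, Subtype.val_injective.mem_set_image,
      α.injective.mem_set_image]
    exact (Subtype.val_injective.mem_set_image (a := ⟨_, hxy⟩)).symm
  · have hMcoset : ∀ c ∈ (M : Set G), ∀ h ∈ H, h * c ∈ (M : Set G) := fun c hc h hh =>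
      M.mul_mem (hHM hh) hc
    have hφxy : hT.mapLeft α y * (hT.mapLeft α x)⁻¹ ∉ M := fun h =>
      hxy ((QuotientGroup.mem_iff_of_mk_eq_mk hMcoset (hT.mk_mapLeft_mul_inv α hfix x y)).1 h)
    exact iff_of_false (fun ⟨m, _, hm⟩ => hφxy (hm ▸ m.2)) (fun ⟨m, _, hm⟩ => hxy (hm ▸ m.2))

end Subgroup.IsComplement

theorem stmt5_general {G : Type*} [Group G] (H M : Subgroup G) [H.Normal]
    (hHM : H ≤ M) (C : Set G)
    (hCcoset : ∀ c ∈ C, ∀ h ∈ H, h * c ∈ C)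
    (SM TM : Set M)
    (α : M ≃* M) (hα : α '' SM = TM)
    (hfix : ∀ m : M, ((α m : G)) * (m : G)⁻¹ ∈ H) :
    Nonempty (cayRel (C ∪ (Subtype.val '' SM)) ≃r cayRel (C ∪ (Subtype.val '' TM))) := by
  obtain ⟨T, hT, -⟩ := M.exists_isComplement_right 1
  have hfix' : ∀ m : M, ((α m : G) : G ⧸ H) = m := fun m =>
    QuotientGroup.eq_iff_div_mem.2 (by simpa only [div_eq_mul_inv] using hfix m)
  subst hα
  refine ⟨⟨hT.mapLeft α, fun {x y} => ?_⟩⟩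
  simp only [cayRel, Set.mem_union]
  rw [hT.mapLeft_mul_inv_mem_image_iff α hfix' hHM,
    QuotientGroup.mem_iff_of_mk_eq_mk hCcoset (hT.mk_mapLeft_mul_inv α hfix' x y)]

/-- If `H ⊴ G`, `H ≤ M ≤ G`, `C ⊆ G \\ H` is a union of cosets of `H`,
and `S_M, T_M ⊆ M \\ {1}` with `S_M^α = T_M` for some `α ∈ Aut(M)` fixing every
coset of `H` in `M`, then `Cay(G, C ∪ S_M) ≅ Cay(G, C ∪ T_M)`. -/
theorem stmt5 {G : Type*} [Group G] [Finite G] (H M : Subgroup G) [H.Normal]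
    (hHM : H ≤ M) (C : Set G)
    (hCH : ∀ c ∈ C, c ∉ H)
    (hCcoset : ∀ c ∈ C, ∀ h ∈ H, h * c ∈ C)
    (SM TM : Set M) (hSM : (1 : M) ∉ SM) (hTM : (1 : M) ∉ TM)
    (α : M ≃* M) (hα : α '' SM = TM)
    (hfix : ∀ m : M, ((α m : G)) * (m : G)⁻¹ ∈ H) :
    Nonempty (cayRel (C ∪ (Subtype.val '' SM)) ≃r cayRel (C ∪ (Subtype.val '' TM))) :=
  stmt5_general H M hHM C hCcoset SM TM α hα hfix
end

section
/- Let n ≥ 4 be even and D_{2n} = ⟨a, b | a^n = b² = 1, a^b = a^{−1}⟩. Let H ⊆ ⟨a²⟩ and K ⊆ a⟨a²⟩ with H = H^{−1} and K = K^{−1}. Then Cay(D_{2n}, bH ∪ K) ≅ Cay(D_{2n}, bH ∪ bK). -/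
section IndexTwo

variable {G : Type*} [Group G] {M : Subgroup G} {b : G}

theorem nonempty_relIso_cayRel_of_index_eq_two (hM : M.index = 2) (hbM : b ∈ M)
    (hb : b * b = 1) {S T : Set G} (hS : ∀ g ∈ S, b * g * b ∈ S)
    (hT_mem : ∀ g ∈ M, g ∈ T ↔ g ∈ S) (hT_notMem : ∀ g ∉ M, g ∈ T ↔ b * g ∈ S) :
    Nonempty (cayRel S ≃r cayRel T) := by
  classical
  have hb_inv : b⁻¹ = b := inv_eq_of_mul_eq_one_right hb
  have hbb : ∀ g, b * (b * g) = g := fun g => by rw [← mul_assoc, hb, one_mul]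
  have hconj : ∀ g, b * g * b ∈ S ↔ g ∈ S := fun g =>
    ⟨fun h => by simpa [mul_assoc, hb, hbb] using hS _ h, hS g⟩
  have hbM_iff : ∀ g, b * g ∈ M ↔ g ∈ M := fun g => M.mul_mem_cancel_left hbM
  have hMb_iff : ∀ g, g * b ∈ M ↔ g ∈ M := fun g => M.mul_mem_cancel_right hbM
  let φ : G → G := fun x => if x ∈ M then x else b * x
  have hφ : Function.Involutive φ := by
    intro x
    by_cases hx : x ∈ M <;> simp [φ, hx, hbM_iff, hbb]
  refine ⟨⟨hφ.toPerm, fun {x y} => ?_⟩⟩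
  have hyx : y * x⁻¹ ∈ M ↔ (y ∈ M ↔ x ∈ M) := by
    rw [M.mul_mem_iff_of_index_two hM, inv_mem_iff]
  simp only [cayRel, Function.Involutive.coe_toPerm, φ]
  by_cases hx : x ∈ M <;> by_cases hy : y ∈ M <;> simp only [hx, hy, if_true, if_false]
  · exact hT_mem _ (hyx.2 (iff_of_true hy hx))
  · rw [mul_assoc, hT_notMem _ (by simp [hbM_iff, hyx, hx, hy]), hbb]
  · rw [mul_inv_rev, hb_inv, ← mul_assoc, hT_notMem _ (by simp [hMb_iff, hyx, hx, hy]),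
      ← mul_assoc, hconj]
  · rw [mul_inv_rev, hb_inv, ← mul_assoc, mul_assoc b,
      hT_mem _ (by simp [hbM_iff, hMb_iff, hyx, hx, hy]), hconj]

theorem nonempty_relIso_cayRel_image_union (hM : M.index = 2) (hbM : b ∈ M) (hb : b * b = 1)
    {H K : Set G} (hHM : H ⊆ M) (hKM : ∀ k ∈ K, k ∉ M)
    (hbH : ∀ h ∈ H, b * h * b ∈ H) (hbK : ∀ k ∈ K, b * k * b ∈ K) :
    Nonempty (cayRel ((b * ·) '' H ∪ K) ≃r cayRel ((b * ·) '' H ∪ (b * ·) '' K)) := by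
  have hb_inv : b⁻¹ = b := inv_eq_of_mul_eq_one_right hb
  have hbM_iff : ∀ g, b * g ∈ M ↔ g ∈ M := fun g => M.mul_mem_cancel_left hbM
  refine nonempty_relIso_cayRel_of_index_eq_two hM hbM hb ?_ ?_ ?_ <;>
    simp only [Set.image_mul_left, hb_inv, Set.mem_union, Set.mem_preimage]
  · rintro g (hg | hg)
    · left
      simpa [← mul_assoc, hb] using hbH _ hg
    · exact Or.inr (hbK g hg)
  · intro g hg
    have hbg : b * g ∉ K := fun h => hKM _ h ((hbM_iff g).2 hg)
    have hg' : g ∉ K := fun h => hKM _ h hg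
    simp [hbg, hg']
  · intro g hg
    have hbg : b * g ∉ H := fun h => hg ((hbM_iff g).1 (hHM h))
    have hbbg : b * (b * g) ∉ H := fun h => hg (by simpa [← mul_assoc, hb] using hHM h)
    simp [hbg, hbbg]

end IndexTwo

namespace DihedralGroup

variable {n : ℕ}

def parity (hn : 2 ∣ n) : DihedralGroup n → ZMod 2
  | r i => ZMod.castHom hn (ZMod 2) i
  | sr i => ZMod.castHom hn (ZMod 2) i

@[simp] theorem parity_r (hn : 2 ∣ n) (i : ZMod n) : parity hn (r i) = ZMod.castHom hn _ i := rfl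

@[simp] theorem parity_sr (hn : 2 ∣ n) (i : ZMod n) : parity hn (sr i) = ZMod.castHom hn _ i :=
  rfl

theorem parity_mul (hn : 2 ∣ n) (x y : DihedralGroup n) :
    parity hn (x * y) = parity hn x + parity hn y := by
  rcases x with i | i <;> rcases y with j | j <;>
    simp only [r_mul_r, r_mul_sr, sr_mul_r, sr_mul_sr, parity_r, parity_sr, map_add, map_sub,
      CharTwo.sub_eq_add, add_comm]

def evenSubgroup (hn : 2 ∣ n) : Subgroup (DihedralGroup n) where
  carrier := {x | parity hn x = 0}
  mul_mem' {x y} hx hy := by simp_all [parity_mul]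
  one_mem' := map_zero (ZMod.castHom hn (ZMod 2))
  inv_mem' {x} hx := by
    rcases x with i | i <;> simp_all [inv_r, inv_sr]

theorem mem_evenSubgroup (hn : 2 ∣ n) {x : DihedralGroup n} :
    x ∈ evenSubgroup hn ↔ parity hn x = 0 := Iff.rfl

theorem index_evenSubgroup (hn : 2 ∣ n) : (evenSubgroup hn).index = 2 := by
  refine Subgroup.index_eq_two_iff'.2 ⟨r 1, fun x => ?_⟩
  simp only [mem_evenSubgroup, parity_mul, parity_r, map_one]
  generalize parity hn x = p
  revert p
  decide

theorem sr_mem_evenSubgroup (hn : 2 ∣ n) : sr 0 ∈ evenSubgroup hn :=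
  map_zero (ZMod.castHom hn (ZMod 2))

theorem zpowers_r_two_le_evenSubgroup (hn : 2 ∣ n) :
    Subgroup.zpowers (r 2) ≤ evenSubgroup hn :=
  Subgroup.zpowers_le.2 <| by simp only [mem_evenSubgroup, parity_r, map_ofNat]; decide

theorem r_one_mul_notMem_evenSubgroup (hn : 2 ∣ n) {y : DihedralGroup n}
    (hy : y ∈ Subgroup.zpowers (r 2)) : r 1 * y ∉ evenSubgroup hn := by
  rw [mem_evenSubgroup, parity_mul, (mem_evenSubgroup hn).1 (zpowers_r_two_le_evenSubgroup hn hy),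
    parity_r, map_one, add_zero]
  exact one_ne_zero

theorem zpowers_r_two_le_zpowers_r_one :
    Subgroup.zpowers (r 2 : DihedralGroup n) ≤ Subgroup.zpowers (r 1) :=
  Subgroup.zpowers_le.2 ⟨2, by simp⟩

theorem sr_mul_mul_sr_mem {L : Set (DihedralGroup n)} (hL : L⁻¹ = L)
    (hLr : L ⊆ ↑(Subgroup.zpowers (r 1 : DihedralGroup n))) (i : ZMod n) :
    ∀ x ∈ L, sr i * x * sr i ∈ L := by
  intro x hx
  obtain ⟨k, rfl⟩ := hLr hx
  rw [← hL, Set.mem_inv]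
  simpa [r_one_zpow, sr_mul_r, sr_mul_sr, inv_r] using hx

end DihedralGroup

theorem stmt6_general (n : ℕ) (heven : Even n)
    (H K : Set (DihedralGroup n))
    (hH : H ⊆ (Subgroup.zpowers (DihedralGroup.r (2 : ZMod n)) : Set (DihedralGroup n)))
    (hK : K ⊆ (DihedralGroup.r (1 : ZMod n) * ·) ''
          (Subgroup.zpowers (DihedralGroup.r (2 : ZMod n)) : Set (DihedralGroup n)))
    (hHinv : H⁻¹ = H) (hKinv : K⁻¹ = K) :
    Nonempty (cayRel ((DihedralGroup.sr (0 : ZMod n) * ·) '' H ∪ K) ≃r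
      cayRel ((DihedralGroup.sr (0 : ZMod n) * ·) '' H ∪
              (DihedralGroup.sr (0 : ZMod n) * ·) '' K)) := by
  open DihedralGroup in
  have hn2 : 2 ∣ n := even_iff_two_dvd.mp heven
  have hHr : H ⊆ ↑(Subgroup.zpowers (r 1 : DihedralGroup n)) :=
    fun h hh => zpowers_r_two_le_zpowers_r_one (hH hh)
  have hKr : K ⊆ ↑(Subgroup.zpowers (r 1 : DihedralGroup n)) := by
    rintro _ hk
    obtain ⟨y, hy, rfl⟩ := hK hk
    exact mul_mem (Subgroup.mem_zpowers _) (zpowers_r_two_le_zpowers_r_one hy)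
  refine nonempty_relIso_cayRel_image_union (index_evenSubgroup hn2) (sr_mem_evenSubgroup hn2)
    (sr_mul_self 0) (fun h hh => zpowers_r_two_le_evenSubgroup hn2 (hH hh)) ?_
    (sr_mul_mul_sr_mem hHinv hHr 0) (sr_mul_mul_sr_mem hKinv hKr 0)
  rintro _ hk
  obtain ⟨y, hy, rfl⟩ := hK hk
  exact r_one_mul_notMem_evenSubgroup hn2 hy

/-- For `n ≥ 4` even, `H ⊆ ⟨a²⟩` and `K ⊆ a⟨a²⟩` inverse-closed,
`Cay(D_{2n}, bH ∪ K) ≅ Cay(D_{2n}, bH ∪ bK)`. -/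
theorem stmt6 (n : ℕ) (hn : 4 ≤ n) (heven : Even n)
    (H K : Set (DihedralGroup n))
    (hH : H ⊆ (Subgroup.zpowers (DihedralGroup.r (2 : ZMod n)) : Set (DihedralGroup n)))
    (hK : K ⊆ (DihedralGroup.r (1 : ZMod n) * ·) ''
          (Subgroup.zpowers (DihedralGroup.r (2 : ZMod n)) : Set (DihedralGroup n)))
    (hHinv : H⁻¹ = H) (hKinv : K⁻¹ = K) :
    Nonempty (cayRel ((DihedralGroup.sr (0 : ZMod n) * ·) '' H ∪ K) ≃r
      cayRel ((DihedralGroup.sr (0 : ZMod n) * ·) '' H ∪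
              (DihedralGroup.sr (0 : ZMod n) * ·) '' K)) :=
  stmt6_general n heven H K hH hK hHinv hKinv
end
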